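/- Let p be a prime and let L be a complete normed field whose norm satisfies the ultrametric inequality and which is a normed ℚ_p-algebra. Let f ∈ ℤ_p[[X]]. Suppose there exist infinitely many integers k ≥ 1 such that L contains a primitive p^k-th root of unity ζ_k with f(ζ_k − 1) = 0 (this value is defined since ‖ζ_k − 1‖ < 1). Then f = 0. -/

import Mathlib

/-!
If `f ≠ 0`, let `c_N` be the first coefficient of `f` of maximal norm. Since `ℤ_p` is discretely
valued, the earlier coefficients are smaller by a factor `p`, so on the annulus
`p^(-1/N) < ‖x‖ < 1` the term `c_N x^N` strictly dominates the series and
`‖f(x)‖ = ‖c_N‖ ‖x‖^N ≠ 0`. For a primitive `p^k`-th root of unity `ζ`, the identity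
`Φ_{p^k}(1) = ∏ (1 - μ) = p` over the primitive roots `μ`, all of which have
`‖μ - 1‖ = ‖ζ - 1‖`, gives `‖ζ - 1‖^φ(p^k) = 1/p`; hence `ζ - 1` lies in the annulus as soon as
`φ(p^k) > N`, which holds for all large `k`.
-/

/-- Evaluation of a power series `f ∈ ℤ_p[[X]]` at a point `x` of a normed `ℚ_p`-algebra `L`
(intended for `‖x‖ < 1`): `f(x) = ∑_{n≥0} (coeff_n f)·x^n`. -/
noncomputable def padicEval (p : ℕ) [Fact p.Prime] (L : Type*) [NormedField L]
    [NormedAlgebra ℚ_[p] L] (f : PowerSeries ℤ_[p]) (x : L) : L :=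
  ∑' n : ℕ, algebraMap ℚ_[p] L ((PowerSeries.coeff (R := ℤ_[p]) n f : ℚ_[p])) * x ^ n

open Polynomial PowerSeries

lemma IsUltrametricDist.norm_pow_sub_one_le {R : Type*} [NormedRing R] [NormOneClass R]
    [IsUltrametricDist R] {ζ : R} (hζ : ‖ζ‖ ≤ 1) (i : ℕ) :
    ‖ζ ^ i - 1‖ ≤ ‖ζ - 1‖ := by
  have hgeom : ‖∑ j ∈ Finset.range i, ζ ^ j‖ ≤ 1 :=
    IsUltrametricDist.norm_sum_le_of_forall_le_of_nonneg zero_le_one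
      fun j _ ↦ (_root_.norm_pow_le ζ j).trans (pow_le_one₀ (norm_nonneg ζ) hζ)
  calc ‖ζ ^ i - 1‖ = ‖(∑ j ∈ Finset.range i, ζ ^ j) * (ζ - 1)‖ := by rw [geom_sum_mul]
    _ ≤ 1 * ‖ζ - 1‖ := (norm_mul_le _ _).trans (by gcongr)
    _ = ‖ζ - 1‖ := one_mul _

lemma IsUltrametricDist.norm_tsum_eq_of_forall_norm_le {E ι : Type*} [NormedAddCommGroup E]
    [IsUltrametricDist E] {a : ι → E} (ha : Summable a) (i : ι) {C : ℝ} (hC₀ : 0 ≤ C)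
    (hC : C < ‖a i‖) (h : ∀ j ≠ i, ‖a j‖ ≤ C) : ‖∑' j, a j‖ = ‖a i‖ := by
  classical
  have hrest : ‖∑' j, if j = i then 0 else a j‖ ≤ C :=
    norm_tsum_le_of_forall_le_of_nonneg hC₀ fun j ↦ by
      split_ifs with hj
      · simpa using hC₀
      · exact h j hj
  rw [ha.tsum_eq_add_tsum_ite i, norm_add_eq_max_of_norm_ne_norm (by linarith),
    max_eq_left (by linarith)]

namespace IsPrimitiveRoot

variable {L : Type*} [NormedField L] [IsUltrametricDist L]

lemma norm_sub_one_eq {n : ℕ} [NeZero n] {ζ μ : L} (hζ : IsPrimitiveRoot ζ n)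
    (hμ : IsPrimitiveRoot μ n) : ‖μ - 1‖ = ‖ζ - 1‖ := by
  have h_le {ζ μ : L} (hζ : IsPrimitiveRoot ζ n) (hμ : IsPrimitiveRoot μ n) :
      ‖μ - 1‖ ≤ ‖ζ - 1‖ := by
    obtain ⟨i, -, rfl⟩ := hζ.eq_pow_of_pow_eq_one hμ.pow_eq_one
    exact IsUltrametricDist.norm_pow_sub_one_le (hζ.isOfFinOrder (NeZero.ne n)).norm_eq_one.le i
  exact le_antisymm (h_le hζ hμ) (h_le hμ hζ)

lemma norm_sub_one_pow_totient {p k : ℕ} [Fact p.Prime] {ζ : L}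
    (hζ : IsPrimitiveRoot ζ (p ^ (k + 1))) :
    ‖ζ - 1‖ ^ Nat.totient (p ^ (k + 1)) = ‖(p : L)‖ := by
  have hprod : ∏ μ ∈ primitiveRoots (p ^ (k + 1)) L, (1 - μ) = p := by
    simpa [eval_prod] using congrArg (eval 1) (cyclotomic_eq_prod_X_sub_primitiveRoots hζ).symm
  rw [← hprod, norm_prod, ← hζ.card_primitiveRoots, ← Finset.prod_const]
  refine Finset.prod_congr rfl fun μ hμ ↦ ?_
  rw [norm_sub_rev 1 μ]
  exact (norm_sub_one_eq hζ ((mem_primitiveRoots (NeZero.pos _)).mp hμ)).symm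

end IsPrimitiveRoot

lemma PadicInt.norm_le_inv_mul_of_norm_lt {p : ℕ} [Fact p.Prime] {a b : ℤ_[p]} (h : ‖a‖ < ‖b‖) :
    ‖a‖ ≤ (p : ℝ)⁻¹ * ‖b‖ := by
  have hb : b ≠ 0 := norm_pos_iff.mp ((norm_nonneg a).trans_lt h)
  rw [norm_eq_zpow_neg_valuation hb, norm_lt_pow_iff_norm_le_pow_sub_one] at h
  rwa [norm_eq_zpow_neg_valuation hb, mul_comm,
    ← zpow_sub_one₀ (by simp [(Fact.out : p.Prime).ne_zero])]

lemma PowerSeries.exists_first_max_norm_coeff {p : ℕ} [Fact p.Prime] {f : ℤ_[p]⟦X⟧}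
    (hf : f ≠ 0) : ∃ N, coeff N f ≠ 0 ∧ (∀ n, ‖coeff n f‖ ≤ ‖coeff N f‖) ∧
      ∀ n < N, ‖coeff n f‖ < ‖coeff N f‖ := by
  classical
  have hval : ∃ v n, coeff n f ≠ 0 ∧ (coeff n f).valuation = v := by
    obtain ⟨n, hn⟩ := exists_coeff_ne_zero_iff_ne_zero.mpr hf
    exact ⟨_, n, hn, rfl⟩
  -- a nonzero coefficient of minimal valuation has maximal norm
  have hmax : ∃ N, coeff N f ≠ 0 ∧ ∀ n, ‖coeff n f‖ ≤ ‖coeff N f‖ := by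
    obtain ⟨N, hN, hNv⟩ := Nat.find_spec hval
    refine ⟨N, hN, fun n ↦ ?_⟩
    rcases eq_or_ne (coeff n f) 0 with hn | hn
    · simp [hn]
    rw [PadicInt.norm_eq_zpow_neg_valuation hn, PadicInt.norm_eq_zpow_neg_valuation hN, hNv]
    gcongr
    · exact_mod_cast (Fact.out : p.Prime).one_le
    · exact_mod_cast Nat.find_min' hval ⟨n, hn, rfl⟩
  obtain ⟨hN, hNmax⟩ := Nat.find_spec hmax
  refine ⟨Nat.find hmax, hN, hNmax, fun n hn ↦ lt_of_not_ge fun hge ↦ Nat.find_min hmax hn ?_⟩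
  exact ⟨fun h0 ↦ hN (norm_le_zero_iff.mp (by simpa [h0] using hge)),
    fun k ↦ (hNmax k).trans hge⟩

section NormedPadicAlgebra

variable {p : ℕ} [Fact p.Prime] {L : Type*} [NormedField L] [NormedAlgebra ℚ_[p] L]

lemma norm_natCast_prime : ‖(p : L)‖ = (p : ℝ)⁻¹ := by
  rw [← map_natCast (algebraMap ℚ_[p] L), norm_algebraMap', Padic.norm_p]

lemma norm_algebraMap_padicInt (c : ℤ_[p]) : ‖algebraMap ℚ_[p] L c‖ = ‖c‖ := by
  rw [norm_algebraMap', PadicInt.padic_norm_e_of_padicInt]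

lemma summable_padicEval [IsUltrametricDist L] [CompleteSpace L] (f : ℤ_[p]⟦X⟧) {x : L}
    (hx : ‖x‖ < 1) :
    Summable fun n ↦ algebraMap ℚ_[p] L (coeff (R := ℤ_[p]) n f : ℚ_[p]) * x ^ n := by
  refine NonarchimedeanAddGroup.summable_of_tendsto_cofinite_zero ?_
  rw [Nat.cofinite_eq_atTop]
  refine squeeze_zero_norm (fun n ↦ ?_) (tendsto_pow_atTop_nhds_zero_of_lt_one (norm_nonneg x) hx)
  rw [norm_mul, norm_pow, norm_algebraMap_padicInt]
  exact mul_le_of_le_one_left (by positivity) (PadicInt.norm_le_one _)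

lemma norm_padicEval_eq [IsUltrametricDist L] [CompleteSpace L] {f : ℤ_[p]⟦X⟧} {N : ℕ}
    (hN : coeff N f ≠ 0) (hmax : ∀ n, ‖coeff n f‖ ≤ ‖coeff N f‖)
    (hfirst : ∀ n < N, ‖coeff n f‖ < ‖coeff N f‖) {x : L} (hx : ‖x‖ < 1)
    (hxN : (p : ℝ)⁻¹ < ‖x‖ ^ N) :
    ‖padicEval p L f x‖ = ‖coeff N f‖ * ‖x‖ ^ N := by
  have hterm (n : ℕ) :
      ‖algebraMap ℚ_[p] L (coeff (R := ℤ_[p]) n f : ℚ_[p]) * x ^ n‖ = ‖coeff n f‖ * ‖x‖ ^ n := by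
    rw [norm_mul, norm_pow, norm_algebraMap_padicInt]
  have hcN : 0 < ‖coeff N f‖ := norm_pos_iff.mpr hN
  have hpN : 0 < ‖x‖ ^ N := (inv_nonneg.mpr p.cast_nonneg).trans_lt hxN
  set C := ‖coeff N f‖ * max (p : ℝ)⁻¹ (‖x‖ ^ (N + 1))
  have hlt : C < ‖coeff N f‖ * ‖x‖ ^ N := by
    refine mul_lt_mul_of_pos_left (max_lt hxN ?_) hcN
    rw [pow_succ]
    exact mul_lt_of_lt_one_right hpN hx
  have hle (n : ℕ) (hn : n ≠ N) : ‖coeff n f‖ * ‖x‖ ^ n ≤ C := by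
    rcases hn.lt_or_gt with hnN | hNn
    · calc ‖coeff n f‖ * ‖x‖ ^ n ≤ (p : ℝ)⁻¹ * ‖coeff N f‖ * 1 :=
            mul_le_mul (PadicInt.norm_le_inv_mul_of_norm_lt (hfirst n hnN))
              (pow_le_one₀ (norm_nonneg x) hx.le) (by positivity) (by positivity)
        _ ≤ C := by
            rw [mul_one, mul_comm]
            exact mul_le_mul_of_nonneg_left (le_max_left _ _) hcN.le
    · calc ‖coeff n f‖ * ‖x‖ ^ n ≤ ‖coeff N f‖ * ‖x‖ ^ (N + 1) :=
            mul_le_mul (hmax n) (pow_le_pow_of_le_one (norm_nonneg x) hx.le hNn)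
              (by positivity) (by positivity)
        _ ≤ C := mul_le_mul_of_nonneg_left (le_max_right _ _) hcN.le
  have hsum := summable_padicEval f hx
  have hC0 : 0 ≤ C := mul_nonneg hcN.le (le_max_of_le_left (by positivity))
  rw [padicEval, IsUltrametricDist.norm_tsum_eq_of_forall_norm_le hsum N hC0
    (by rwa [hterm]) fun n hn ↦ by rw [hterm]; exact hle n hn, hterm]

namespace IsPrimitiveRoot

variable [IsUltrametricDist L] {k : ℕ} {ζ : L}

lemma norm_sub_one_lt_one (hζ : IsPrimitiveRoot ζ (p ^ (k + 1))) : ‖ζ - 1‖ < 1 := by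
  have hp : (p : ℝ)⁻¹ < 1 := inv_lt_one_of_one_lt₀ (by exact_mod_cast (Fact.out : p.Prime).one_lt)
  by_contra! h
  have hnorm := hζ.norm_sub_one_pow_totient
  rw [norm_natCast_prime (L := L)] at hnorm
  linarith [one_le_pow₀ (n := Nat.totient (p ^ (k + 1))) h]

lemma inv_prime_lt_norm_sub_one_pow (hζ : IsPrimitiveRoot ζ (p ^ (k + 1))) {N : ℕ}
    (hN : N < Nat.totient (p ^ (k + 1))) : (p : ℝ)⁻¹ < ‖ζ - 1‖ ^ N := by
  have hζ1 : ζ ≠ 1 := hζ.ne_one (Nat.one_lt_pow k.succ_ne_zero (Fact.out : p.Prime).one_lt)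
  rw [← norm_natCast_prime (L := L), ← hζ.norm_sub_one_pow_totient]
  exact pow_lt_pow_right_of_lt_one₀ (norm_pos_iff.mpr (sub_ne_zero.mpr hζ1))
    hζ.norm_sub_one_lt_one hN

end IsPrimitiveRoot

end NormedPadicAlgebra

/-- If `f ∈ ℤ_p[[X]]` vanishes at `ζ - 1` for primitive `p^k`-th roots of unity `ζ ∈ L` for
infinitely many `k ≥ 1`, then `f = 0`. -/
theorem stmt_6 (p : ℕ) [Fact p.Prime] (L : Type*) [NormedField L] [CompleteSpace L]
    [NormedAlgebra ℚ_[p] L]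
    (h_ultra : ∀ x y : L, ‖x + y‖ ≤ max ‖x‖ ‖y‖)
    (f : PowerSeries ℤ_[p])
    (h : {k : ℕ | 1 ≤ k ∧
      ∃ ζ : L, IsPrimitiveRoot ζ (p ^ k) ∧ padicEval p L f (ζ - 1) = 0}.Infinite) :
    f = 0 := by
  have : IsUltrametricDist L := .isUltrametricDist_of_forall_norm_add_le_max_norm h_ultra
  by_contra hf
  obtain ⟨N, hN, hmax, hfirst⟩ := PowerSeries.exists_first_max_norm_coeff hf
  obtain ⟨k, ⟨-, ζ, hζ, hζ0⟩, hNk⟩ := h.exists_gt N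
  obtain ⟨j, rfl⟩ : ∃ j, k = j + 1 := ⟨k - 1, by omega⟩
  have htot : N < Nat.totient (p ^ (j + 1)) := by
    have hp := (Fact.out : p.Prime).one_lt
    rw [Nat.totient_prime_pow_succ Fact.out]
    calc N < j + 1 := hNk
      _ ≤ p ^ j := Nat.lt_pow_self hp
      _ ≤ p ^ j * (p - 1) := Nat.le_mul_of_pos_right _ (by omega)
  have hxN := hζ.inv_prime_lt_norm_sub_one_pow htot
  have hval := norm_padicEval_eq hN hmax hfirst hζ.norm_sub_one_lt_one hxN
  rw [hζ0, norm_zero] at hval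
  exact (mul_pos (norm_pos_iff.mpr hN) ((inv_nonneg.mpr p.cast_nonneg).trans_lt hxN)).ne hval
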